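/- For each u ∈ [0,∞), the curve γ_u defined by γ_u(s) = (s, s) for 0 ≤ s ≤ u and γ_u(s) = (s + f⁻¹(s − u), s) for s ≥ u is a Lipschitz null curve for the metric g = −dt² + (1 + sqrt((t − |x|)₊))dx², i.e., it satisfies −α'(s)² + ρ(γ_u(s))·β'(s)² = 0 almost everywhere. -/

import Mathlib

noncomputable def rho (t x : ℝ) : ℝ := 1 + Real.sqrt (max (t - |x|) 0)

noncomputable def f (y : ℝ) : ℝ :=
  4 / 3 * ((1 + Real.sqrt y) ^ ((3 : ℝ) / 2) - 1) + 2 * Real.sqrt y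

/-!
Before time `u` the curve runs along the light cone `t = |x|`, where `ρ = 1`, with velocity
`(1, 1)`. Afterwards `α(s) - s = f⁻¹(s - u) =: τ` is exactly `(t - |x|)₊` along the curve, and
`f'(τ) = (√(1 + √τ) - 1)⁻¹`, so `α' = 1 + (f⁻¹)' = √(1 + √τ) = √ρ`. For the Lipschitz bound,
`f b - f a ≥ 2 (√b - √a)` makes `f⁻¹` Lipschitz on `[0, T]` with constant `√(f⁻¹ T)`.
-/

open Real Set Filter Topology MeasureTheory

theorem StrictMonoOn.strictMonoOn_of_rightInvOn {α β : Type*} [LinearOrder α] [Preorder β]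
    {g : α → β} {h : β → α} {s : Set α} {t : Set β} (hg : StrictMonoOn g s)
    (hmaps : MapsTo h t s) (hinv : RightInvOn h g t) : StrictMonoOn h t := by
  refine MonotoneOn.strictMonoOn_of_injOn (fun a ha b hb hab => ?_) (LeftInvOn.injOn hinv)
  by_contra hlt
  have := hg (hmaps hb) (hmaps ha) (not_le.1 hlt)
  rw [hinv ha, hinv hb] at this
  exact this.not_ge hab

lemma f_zero : f 0 = 0 := by
  simp [f]

lemma f_strictMonoOn : StrictMonoOn f (Ici 0) := by
  intro a ha b hb hab
  have hsqrt : √a < √b := sqrt_lt_sqrt ha hab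
  have hrpow : (1 + √a) ^ ((3 : ℝ) / 2) < (1 + √b) ^ ((3 : ℝ) / 2) :=
    rpow_lt_rpow (by positivity) (by linarith) (by norm_num)
  unfold f
  linarith

lemma sub_le_sqrt_mul_f_sub {a b : ℝ} (ha : 0 ≤ a) (hab : a ≤ b) :
    b - a ≤ √b * (f b - f a) := by
  have hsqrt : √a ≤ √b := sqrt_le_sqrt hab
  have hf : 2 * (√b - √a) ≤ f b - f a := by
    have : (1 + √a) ^ ((3 : ℝ) / 2) ≤ (1 + √b) ^ ((3 : ℝ) / 2) :=
      rpow_le_rpow (by positivity) (by linarith) (by norm_num)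
    unfold f
    linarith
  have hb : √b * √b = b := mul_self_sqrt (ha.trans hab)
  have ha' : √a * √a = a := mul_self_sqrt ha
  nlinarith [sqrt_nonneg a]

lemma f_hasDerivAt {t : ℝ} (ht : 0 < t) : HasDerivAt f (√(1 + √t) - 1)⁻¹ t := by
  have hsqrt : HasDerivAt (√·) (1 / (2 * √t)) t := hasDerivAt_sqrt ht.ne'
  have hpos : 0 < 1 + √t := by positivity
  have hf : HasDerivAt f _ t := (((hsqrt.const_add 1).rpow_const (p := (3 : ℝ) / 2)
    (Or.inl hpos.ne')).sub_const 1 |>.const_mul (4 / 3)).add (hsqrt.const_mul 2)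
  convert hf using 1
  set a := √(1 + √t) with ha
  have ha2 : a ^ 2 = 1 + √t := sq_sqrt hpos.le
  have ha_ne : a - 1 ≠ 0 := by nlinarith [sqrt_nonneg (1 + √t), sqrt_pos.2 ht]
  rw [show (3 : ℝ) / 2 - 1 = 1 / 2 by norm_num, ← sqrt_eq_rpow, ← ha]
  -- the derivative computes to `(a + 1) / √t`, and `√t = a² - 1`
  field_simp
  linear_combination -4 * ha2

section RightInverse

variable {finv : ℝ → ℝ}

lemma finv_strictMonoOn (hmaps : MapsTo finv (Ici 0) (Ici 0)) (hinv : RightInvOn finv f (Ici 0)) :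
    StrictMonoOn finv (Ici 0) :=
  f_strictMonoOn.strictMonoOn_of_rightInvOn hmaps hinv

lemma finv_zero (hmaps : MapsTo finv (Ici 0) (Ici 0)) (hinv : RightInvOn finv f (Ici 0)) :
    finv 0 = 0 :=
  f_strictMonoOn.injOn (hmaps self_mem_Ici) self_mem_Ici (by rw [hinv self_mem_Ici, f_zero])

lemma finv_pos (hmaps : MapsTo finv (Ici 0) (Ici 0)) (hinv : RightInvOn finv f (Ici 0))
    {y : ℝ} (hy : 0 < y) : 0 < finv y :=
  finv_zero hmaps hinv ▸ finv_strictMonoOn hmaps hinv self_mem_Ici (mem_Ici.2 hy.le) hy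

lemma finv_lipschitzOnWith (hmaps : MapsTo finv (Ici 0) (Ici 0))
    (hinv : RightInvOn finv f (Ici 0)) (T : ℝ) :
    LipschitzOnWith (√(finv T)).toNNReal finv (Icc 0 T) := by
  have hmono := (finv_strictMonoOn hmaps hinv).monotoneOn
  refine LipschitzOnWith.of_le_add_mul' _ fun x hx y hy => ?_
  have hK : 0 ≤ √(finv T) * dist x y := by positivity
  rcases le_total x y with hxy | hyx
  · linarith [hmono hx.1 hy.1 hxy]
  · have hlip := sub_le_sqrt_mul_f_sub (hmaps hy.1) (hmono hy.1 hx.1 hyx)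
    rw [hinv hx.1, hinv hy.1] at hlip
    have hsqrt : √(finv x) ≤ √(finv T) := sqrt_le_sqrt (hmono hx.1 (hx.1.trans hx.2) hx.2)
    rw [Real.dist_eq, abs_of_nonneg (sub_nonneg.2 hyx)]
    nlinarith [sub_nonneg.2 hyx]

lemma finv_hasDerivAt (hmaps : MapsTo finv (Ici 0) (Ici 0)) (hinv : RightInvOn finv f (Ici 0))
    {y : ℝ} (hy : 0 < y) : HasDerivAt finv (√(1 + √(finv y)) - 1) y := by
  have hcont : ContinuousAt finv y :=
    (finv_lipschitzOnWith hmaps hinv (y + 1)).continuousOn.continuousAt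
      (Icc_mem_nhds (by linarith) (by linarith))
  have hne : (√(1 + √(finv y)) - 1)⁻¹ ≠ 0 := by
    have hlt : 1 < √(1 + √(finv y)) := by
      rw [lt_sqrt zero_le_one]
      linarith [sqrt_pos.2 (finv_pos hmaps hinv hy)]
    exact inv_ne_zero (sub_ne_zero.2 hlt.ne')
  have hright : ∀ᶠ z in 𝓝 y, f (finv z) = z :=
    eventually_of_mem (Ioi_mem_nhds hy) fun _ hz => hinv (mem_Ici.2 (le_of_lt hz))
  simpa only [inv_inv] using
    (f_hasDerivAt (finv_pos hmaps hinv hy)).of_local_left_inverse hcont hne hright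

end RightInverse

noncomputable def alpha (finv : ℝ → ℝ) (u s : ℝ) : ℝ :=
  if s ≤ u then s else s + finv (s - u)

section Alpha

variable {finv : ℝ → ℝ} {u s : ℝ}

lemma alpha_eq_add_finv_max (hmaps : MapsTo finv (Ici 0) (Ici 0))
    (hinv : RightInvOn finv f (Ici 0)) : alpha finv u = fun s => s + finv (max (s - u) 0) := by
  ext s
  by_cases hsu : s ≤ u
  · rw [alpha, if_pos hsu, max_eq_right (by linarith), finv_zero hmaps hinv, add_zero]
  · rw [alpha, if_neg hsu, max_eq_left (by linarith)]

lemma alpha_lipschitzOnWith (hmaps : MapsTo finv (Ici 0) (Ici 0))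
    (hinv : RightInvOn finv f (Ici 0)) (hu : 0 ≤ u) (T : ℝ) :
    LipschitzOnWith (1 + (√(finv T)).toNNReal) (alpha finv u) (Icc 0 T) := by
  have hshift : LipschitzWith 1 fun s : ℝ => max (s - u) 0 :=
    (IsometryEquiv.subRight u).isometry.lipschitz.max_const 0
  have hmapsTo : MapsTo (fun s : ℝ => max (s - u) 0) (Icc 0 T) (Icc 0 T) := fun s hs =>
    ⟨le_max_right _ _, max_le (by linarith [hs.2]) (hs.1.trans hs.2)⟩
  rw [alpha_eq_add_finv_max hmaps hinv]
  simpa using LipschitzWith.id.lipschitzOnWith.add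
    ((finv_lipschitzOnWith hmaps hinv T).comp hshift.lipschitzOnWith hmapsTo)

lemma alpha_hasDerivAt_of_lt (hsu : s < u) : HasDerivAt (alpha finv u) 1 s :=
  (hasDerivAt_id s).congr_of_eventuallyEq <|
    eventually_of_mem (Iio_mem_nhds hsu) fun _ hx => if_pos (le_of_lt hx)

lemma alpha_hasDerivAt_of_gt (hmaps : MapsTo finv (Ici 0) (Ici 0))
    (hinv : RightInvOn finv f (Ici 0)) (hsu : u < s) :
    HasDerivAt (alpha finv u) √(1 + √(finv (s - u))) s := by
  have h := (hasDerivAt_id s).add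
    ((finv_hasDerivAt hmaps hinv (sub_pos.2 hsu)).comp_sub_const s u)
  rw [add_sub_cancel] at h
  exact h.congr_of_eventuallyEq <|
    eventually_of_mem (Ioi_mem_nhds hsu) fun _ hx => if_neg (not_le.2 hx)

lemma deriv_alpha_sq (hmaps : MapsTo finv (Ici 0) (Ici 0))
    (hinv : RightInvOn finv f (Ici 0)) (hs : 0 < s) (hsu : s ≠ u) :
    deriv (alpha finv u) s ^ 2 = rho (alpha finv u s) s := by
  rcases hsu.lt_or_gt with hlt | hgt
  · simp [(alpha_hasDerivAt_of_lt hlt).deriv, alpha, hlt.le, rho, abs_of_pos hs]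
  · have ht := hmaps (mem_Ici.2 (sub_pos.2 hgt).le)
    rw [(alpha_hasDerivAt_of_gt hmaps hinv hgt).deriv, sq_sqrt (by positivity), alpha,
      if_neg (not_le.2 hgt), rho, abs_of_pos hs, add_sub_cancel_left, max_eq_left ht]

end Alpha

theorem gamma_u_lipschitz_null_general (finv : ℝ → ℝ)
    (h_nonneg : ∀ s ∈ Set.Ici (0 : ℝ), finv s ∈ Set.Ici (0 : ℝ))
    (h_right : ∀ s ∈ Set.Ici (0 : ℝ), f (finv s) = s) :
    ∀ u : ℝ, 0 ≤ u →
      (∀ T : ℝ, 0 < T → ∃ K : NNReal,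
        LipschitzOnWith K
          (fun s : ℝ => ((if s ≤ u then s else s + finv (s - u), s) : ℝ × ℝ))
          (Set.Icc 0 T)) ∧
      (∀ᵐ s ∂(MeasureTheory.volume.restrict (Set.Ioi (0 : ℝ))),
        -(deriv (fun s : ℝ => if s ≤ u then s else s + finv (s - u)) s) ^ 2 +
          rho (if s ≤ u then s else s + finv (s - u)) s *
            (deriv (fun s : ℝ => s) s) ^ 2 = 0) := by
  have hmaps : MapsTo finv (Ici 0) (Ici 0) := fun s hs => h_nonneg s hs
  have hinv : RightInvOn finv f (Ici 0) := fun s hs => h_right s hs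
  intro u hu
  refine ⟨fun T _ => ⟨_, (alpha_lipschitzOnWith hmaps hinv hu T).prodMk
    LipschitzWith.id.lipschitzOnWith⟩, ?_⟩
  filter_upwards [ae_restrict_mem measurableSet_Ioi, ae_restrict_of_ae (volume.ae_ne u)]
    with s hs hsu
  rw [deriv_id'', one_pow, mul_one]
  exact neg_add_eq_zero.2 (deriv_alpha_sq hmaps hinv hs hsu)

/-- for each u ∈ [0,∞), the curve γ_u(s) = (s,s) for s ≤ u and
(s + f⁻¹(s−u), s) for s ≥ u is a Lipschitz null curve for g = −dt² + ρ dx²: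
−α'² + ρ(γ_u)·β'² = 0 almost everywhere. -/
theorem gamma_u_lipschitz_null (finv : ℝ → ℝ)
    (h_nonneg : ∀ s ∈ Set.Ici (0 : ℝ), finv s ∈ Set.Ici (0 : ℝ))
    (h_left : ∀ t ∈ Set.Ici (0 : ℝ), finv (f t) = t)
    (h_right : ∀ s ∈ Set.Ici (0 : ℝ), f (finv s) = s) :
    ∀ u : ℝ, 0 ≤ u →
      (∀ T : ℝ, 0 < T → ∃ K : NNReal,
        LipschitzOnWith K
          (fun s : ℝ => ((if s ≤ u then s else s + finv (s - u), s) : ℝ × ℝ))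
          (Set.Icc 0 T)) ∧
      (∀ᵐ s ∂(MeasureTheory.volume.restrict (Set.Ioi (0 : ℝ))),
        -(deriv (fun s : ℝ => if s ≤ u then s else s + finv (s - u)) s) ^ 2 +
          rho (if s ≤ u then s else s + finv (s - u)) s *
            (deriv (fun s : ℝ => s) s) ^ 2 = 0) :=
  gamma_u_lipschitz_null_general finv h_nonneg h_right
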